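/- Let (R, m) be a commutative Noetherian local ring and let I be an ideal of positive grade with a minimal generating set x_1, …, x_n in which each x_i is a nonzerodivisor on R. Then tr_R(I) = Σ_{i=1}^n (x_i : I). -/

import Mathlib

/-!
Every `f : I → R` satisfies `a f(b) = b f(a)` for `a, b ∈ I`, so `f(a) I ⊆ a R`, i.e.
`f(a) ∈ (a : I)`; writing an element of `I` as `Σ cᵢ xᵢ` gives `tr(I) ⊆ Σ (xᵢ : I)`.
Conversely, if `a ∈ I` is a nonzerodivisor and `r I ⊆ a R`, then `b ↦ r b / a` is a
well-defined homomorphism `I → R` taking the value `r` at `a`, so `(a : I) ⊆ tr(I)`.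
-/

/-- The trace ideal of an `R`-module `M`: the ideal of `R` generated by all values `f(m)`
for `f ∈ Hom_R(M, R)` and `m ∈ M`. -/
def traceIdeal (R : Type*) (M : Type*) [CommRing R] [AddCommGroup M] [Module R M] : Ideal R :=
  Ideal.span {r : R | ∃ (f : M →ₗ[R] R) (m : M), f m = r}

section

variable {R : Type*} [CommRing R]

theorem LinearMap.apply_mem_colon_span_singleton {I : Ideal R} (f : I →ₗ[R] R) (a : I) :
    f a ∈ (Ideal.span {(a : R)}).colon I := by
  refine Submodule.mem_colon.mpr fun b hb => Ideal.mem_span_singleton'.mpr ⟨f ⟨b, hb⟩, ?_⟩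
  have hswap : (a : R) • (⟨b, hb⟩ : I) = b • a := Subtype.ext (mul_comm _ _)
  calc f ⟨b, hb⟩ * a = f ((a : R) • ⟨b, hb⟩) := by rw [map_smul, smul_eq_mul, mul_comm]
    _ = f (b • a) := by rw [hswap]
    _ = f a • b := by rw [map_smul, smul_eq_mul, smul_eq_mul, mul_comm]

theorem traceIdeal_span_le_sum_colon {ι : Type*} [Fintype ι] (x : ι → R) :
    traceIdeal R (Ideal.span (Set.range x)) ≤
      ∑ i, (Ideal.span {x i}).colon (Ideal.span (Set.range x)) := by
  rw [traceIdeal, Ideal.span_le]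
  rintro _ ⟨f, a, rfl⟩
  obtain ⟨c, hc⟩ := (Submodule.mem_span_range_iff_exists_fun R).mp a.2
  have ha : a = ∑ i, c i • ⟨x i, Ideal.subset_span ⟨i, rfl⟩⟩ :=
    Subtype.ext (by simpa using hc.symm)
  rw [ha, map_sum, SetLike.mem_coe]
  refine Submodule.sum_mem _ fun i _ => ?_
  have hle : (Ideal.span {x i}).colon (Ideal.span (Set.range x)) ≤
      ∑ j, (Ideal.span {x j}).colon (Ideal.span (Set.range x)) :=
    Finset.single_le_sum (f := fun j => (Ideal.span {x j}).colon _) (fun _ _ => bot_le)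
      (Finset.mem_univ i)
  have hmem := hle (f.apply_mem_colon_span_singleton ⟨x i, Ideal.subset_span ⟨i, rfl⟩⟩)
  rw [map_smul, smul_eq_mul]
  exact Ideal.mul_mem_left _ _ hmem

/-- The homomorphism `b ↦ r b / a`, obtained by dividing through the isomorphism `R ≃ a R`. -/
noncomputable def Ideal.dualOfMemColon {I : Ideal R} {a r : R} (ha : a ∈ nonZeroDivisors R)
    (hr : r ∈ (Ideal.span {a}).colon I) : I →ₗ[R] R :=
  ((LinearEquiv.ofInjective (LinearMap.toSpanSingleton R R a) <| LinearMap.ker_eq_bot.mp <|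
      LinearMap.ker_toSpanSingleton_eq_bot_iff.mpr ha.2).symm : _ →ₗ[R] R) ∘ₗ
    LinearMap.codRestrict (LinearMap.toSpanSingleton R R a).range
      (LinearMap.mulLeft R r ∘ₗ I.subtype) fun b => by
        rw [← LinearMap.span_singleton_eq_range]
        exact Submodule.mem_colon.mp hr b b.2

theorem Ideal.dualOfMemColon_apply_self {I : Ideal R} {a r : R} (ha : a ∈ nonZeroDivisors R)
    (hr : r ∈ (Ideal.span {a}).colon I) (haI : a ∈ I) :
    dualOfMemColon ha hr ⟨a, haI⟩ = r := by
  rw [dualOfMemColon, LinearMap.comp_apply, LinearEquiv.coe_toLinearMap,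
    LinearEquiv.symm_apply_eq]
  exact Subtype.ext (by simp)

theorem colon_span_singleton_le_traceIdeal {I : Ideal R} {a : R} (haI : a ∈ I)
    (ha : a ∈ nonZeroDivisors R) : (Ideal.span {a}).colon I ≤ traceIdeal R I :=
  fun _ hr => Ideal.subset_span ⟨_, _, Ideal.dualOfMemColon_apply_self ha hr haI⟩

end

theorem traceIdeal_eq_sum_colon {R : Type*} [CommRing R]
    (I : Ideal R) {n : ℕ} (x : Fin n → R)
    (hgen : Ideal.span (Set.range x) = I)
    (hnzd : ∀ i, x i ∈ nonZeroDivisors R) :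
    traceIdeal R ↥I = ∑ i, (Ideal.span {x i}).colon I := by
  subst hgen
  refine le_antisymm (traceIdeal_span_le_sum_colon x) ?_
  rw [Ideal.sum_eq_sup]
  exact Finset.sup_le fun i _ =>
    colon_span_singleton_le_traceIdeal (Ideal.subset_span ⟨i, rfl⟩) (hnzd i)
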